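/- arXiv:1204.5218 — 7 statements merged into one kernel-verified Lean document; each statement's English description precedes it below -/
import Mathlib

section
/- Let v₁, v₂ ∈ ℤ³ be primitive vectors. If {v₁, v₂} is not a fundamental pair, then max{‖v₁ + v₂‖, ‖v₁ − v₂‖} > max{‖v₁‖, ‖v₂‖} ≥ min{‖v₁ + v₂‖, ‖v₁ − v₂‖}. (Lemma NormRankTwo.) -/
/-- The Euclidean norm of an integer vector in `ℤ³`, regarded as a vector in `ℝ³`. -/
noncomputable def enorm3 (v : Fin 3 → ℤ) : ℝ :=
  Real.sqrt (∑ i, ((v i : ℝ)) ^ 2)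

/-- `v ≈ w` : the coordinates agree in absolute value. -/
def vApprox (v w : Fin 3 → ℤ) : Prop := ∀ i, |v i| = |w i|

/-- `v ≺ w` : either `‖v‖ < ‖w‖`, or `‖v‖ = ‖w‖` and `v` precedes `w` lexicographically
in the absolute values of the entries. -/
def vPrec (v w : Fin 3 → ℤ) : Prop :=
  enorm3 v < enorm3 w ∨
    (enorm3 v = enorm3 w ∧
      ∃ i : Fin 3, |v i| < |w i| ∧ ∀ j : Fin 3, j < i → |v j| = |w j|)

/-- A vector of `ℤ³` is primitive if the gcd of its coordinates is `1`. -/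
def IsPrimitiveVec (v : Fin 3 → ℤ) : Prop := Finset.univ.gcd v = 1

/-- A pair of primitive vectors is a fundamental pair when `v₁ ± v₂ ≻ v₁, v₂`. -/
def FundamentalPair (v₁ v₂ : Fin 3 → ℤ) : Prop :=
  vPrec v₁ (v₁ + v₂) ∧ vPrec v₂ (v₁ + v₂) ∧ vPrec v₁ (v₁ - v₂) ∧ vPrec v₂ (v₁ - v₂)

/-!
By the parallelogram law, `‖v₁ + v₂‖² + ‖v₁ - v₂‖² = 2‖v₁‖² + 2‖v₂‖² > 2 max(‖v₁‖, ‖v₂‖)²` for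
nonzero vectors, so the larger of `‖v₁ ± v₂‖` always exceeds `max(‖v₁‖, ‖v₂‖)`. The second
inequality is just the norm part of the failure of one of the four conditions `v₁ ± v₂ ≻ vᵢ`.
-/

theorem max_norm_lt_max_norm_add_norm_sub {E : Type*} [NormedAddCommGroup E]
    [InnerProductSpace ℝ E] {x y : E} (hx : x ≠ 0) (hy : y ≠ 0) :
    max ‖x‖ ‖y‖ < max ‖x + y‖ ‖x - y‖ := by
  have hpar := parallelogram_law_with_norm ℝ x y
  have hx' := norm_pos_iff.2 hx
  have hy' := norm_pos_iff.2 hy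
  by_contra! h
  have hadd_sq := pow_le_pow_left₀ (norm_nonneg _) ((le_max_left _ _).trans h) 2
  have hsub_sq := pow_le_pow_left₀ (norm_nonneg _) ((le_max_right _ _).trans h) 2
  rcases le_total ‖x‖ ‖y‖ with hxy | hxy
  · rw [max_eq_right hxy] at hadd_sq hsub_sq
    nlinarith
  · rw [max_eq_left hxy] at hadd_sq hsub_sq
    nlinarith

noncomputable def euclideanOfInt (v : Fin 3 → ℤ) : EuclideanSpace ℝ (Fin 3) :=
  WithLp.toLp 2 fun i => (v i : ℝ)

theorem enorm3_eq_norm_euclideanOfInt (v : Fin 3 → ℤ) : enorm3 v = ‖euclideanOfInt v‖ := by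
  simp only [enorm3, EuclideanSpace.norm_eq, euclideanOfInt, Real.norm_eq_abs, sq_abs]

theorem euclideanOfInt_add (v w : Fin 3 → ℤ) :
    euclideanOfInt (v + w) = euclideanOfInt v + euclideanOfInt w := by
  ext i
  simp [euclideanOfInt]

theorem euclideanOfInt_sub (v w : Fin 3 → ℤ) :
    euclideanOfInt (v - w) = euclideanOfInt v - euclideanOfInt w := by
  ext i
  simp [euclideanOfInt]

theorem euclideanOfInt_ne_zero {v : Fin 3 → ℤ} (hv : v ≠ 0) : euclideanOfInt v ≠ 0 := by
  intro h
  refine hv (funext fun i => ?_)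
  simpa [euclideanOfInt] using congrFun (congrArg WithLp.ofLp h) i

theorem IsPrimitiveVec.ne_zero {v : Fin 3 → ℤ} (hv : IsPrimitiveVec v) : v ≠ 0 := by
  rintro rfl
  simp [IsPrimitiveVec, Finset.gcd_eq_zero_iff.2] at hv

theorem enorm3_le_of_not_vPrec {v w : Fin 3 → ℤ} (h : ¬ vPrec v w) : enorm3 w ≤ enorm3 v :=
  le_of_not_gt fun hlt => h (Or.inl hlt)

theorem min_enorm3_add_sub_le_of_not_fundamentalPair {v₁ v₂ : Fin 3 → ℤ}
    (h : ¬ FundamentalPair v₁ v₂) :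
    min (enorm3 (v₁ + v₂)) (enorm3 (v₁ - v₂)) ≤ max (enorm3 v₁) (enorm3 v₂) := by
  simp only [FundamentalPair, not_and_or] at h
  rcases h with h | h | h | h <;> have := enorm3_le_of_not_vPrec h
  · exact (min_le_left _ _).trans (this.trans (le_max_left _ _))
  · exact (min_le_left _ _).trans (this.trans (le_max_right _ _))
  · exact (min_le_right _ _).trans (this.trans (le_max_left _ _))
  · exact (min_le_right _ _).trans (this.trans (le_max_right _ _))

/-- Lemma (NormRankTwo): if a pair of primitive vectors of `ℤ³` is not fundamental, then
`max ‖v₁ ± v₂‖ > max ‖v₁‖ ‖v₂‖ ≥ min ‖v₁ ± v₂‖`. -/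
theorem normRankTwo (v₁ v₂ : Fin 3 → ℤ)
    (h₁ : IsPrimitiveVec v₁) (h₂ : IsPrimitiveVec v₂)
    (h : ¬ FundamentalPair v₁ v₂) :
    max (enorm3 (v₁ + v₂)) (enorm3 (v₁ - v₂)) > max (enorm3 v₁) (enorm3 v₂) ∧
      max (enorm3 v₁) (enorm3 v₂) ≥ min (enorm3 (v₁ + v₂)) (enorm3 (v₁ - v₂)) := by
  refine ⟨?_, min_enorm3_add_sub_le_of_not_fundamentalPair h⟩
  simp only [enorm3_eq_norm_euclideanOfInt, euclideanOfInt_add, euclideanOfInt_sub]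
  exact max_norm_lt_max_norm_add_norm_sub (euclideanOfInt_ne_zero h₁.ne_zero)
    (euclideanOfInt_ne_zero h₂.ne_zero)
end

section
/- Let {v₁, v₂, v₃} be a ℤ-basis of ℤ³ (i.e., the 3×3 integer matrix with columns v₁, v₂, v₃ has determinant ±1). If every pair {v_i, v_j} with 1 ≤ i ≠ j ≤ 3 is a fundamental pair, then {v₁, v₂, v₃} ⊆ {±e₁, ±e₂, ±e₃}, where e₁, e₂, e₃ is the standard basis of ℤ³. (Main Theorem.) -/
/-- `{v₁, v₂, v₃}` is a `ℤ`-basis of `ℤ³`: the matrix with columns `v₁, v₂, v₃` has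
determinant `±1`. -/
def IsZBasis (v₁ v₂ v₃ : Fin 3 → ℤ) : Prop :=
  (Matrix.of fun i j => ![v₁, v₂, v₃] j i).det = 1 ∨
    (Matrix.of fun i j => ![v₁, v₂, v₃] j i).det = -1

/-!
The Gram matrix of `v₁, v₂, v₃` is an integral symmetric matrix of determinant `det(A)² = 1`,
and a fundamental pair `{x, y}` satisfies `2 |x ⬝ y| ≤ min (x ⬝ x) (y ⬝ y)`. Sorting the diagonal
`a ≤ b ≤ c`, these bounds give `4 = 4 det ≥ a (3b(b - a) + (c - b)(4b - a))`, which forces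
`a = b = c` once `a ≥ 2`. In that cube case `a` even makes the determinant even, while
`a = 2k + 1` makes it at least `(3k + 1)²`; so `a = 1`, and the small cases `a ≤ 1` are direct.
Hence every `vᵢ` has squared norm `1`, i.e. is some `±eₖ`.
-/

open Matrix

section ReducedForm

variable {a b c p q r : ℤ}

theorem eq_one_of_reduced_cube (hp : 2 * |p| ≤ a) (hq : 2 * |q| ≤ a) (hr : 2 * |r| ≤ a)
    (hdet : a ^ 3 + 2 * p * q * r - a * (p ^ 2 + q ^ 2 + r ^ 2) = 1) : a = 1 := by
  obtain ⟨k, rfl | rfl⟩ := Int.even_or_odd' a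
  · have : (2 : ℤ) ∣ 1 :=
      ⟨4 * k ^ 3 + p * q * r - k * (p ^ 2 + q ^ 2 + r ^ 2), by linear_combination -hdet⟩
    omega
  have hk : 0 ≤ k := by linarith [abs_nonneg p]
  have hpk : |p| ≤ k := by omega
  have hqk : |q| ≤ k := by omega
  have hrk : |r| ≤ k := by omega
  have hpqr : -k ^ 3 ≤ p * q * r := by
    have : |p * q * r| ≤ k * k * k := by rw [abs_mul, abs_mul]; gcongr
    linarith [neg_abs_le (p * q * r), pow_three' k]
  have hsq : p ^ 2 + q ^ 2 + r ^ 2 ≤ 3 * k ^ 2 := by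
    rw [← sq_abs p, ← sq_abs q, ← sq_abs r]
    nlinarith [abs_nonneg p, abs_nonneg q, abs_nonneg r]
  -- the bound `det ≥ (3k + 1)²` is attained at `|p| = |q| = |r| = k`, `pqr < 0`
  have : (3 * k + 1) ^ 2 ≤ 1 := by nlinarith
  nlinarith

theorem eq_one_of_reduced_of_le (hab : a ≤ b) (hbc : b ≤ c) (hp : 2 * |p| ≤ b)
    (hq : 2 * |q| ≤ a) (hr : 2 * |r| ≤ a)
    (hdet : a * b * c + 2 * p * q * r - a * p ^ 2 - b * q ^ 2 - c * r ^ 2 = 1) :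
    a = 1 ∧ b = 1 ∧ c = 1 := by
  have ha : 0 ≤ a := by linarith [abs_nonneg q]
  obtain rfl | rfl | ha2 : a = 0 ∨ a = 1 ∨ 2 ≤ a := by omega
  · obtain rfl : q = 0 := abs_nonpos_iff.1 (by linarith)
    obtain rfl : r = 0 := abs_nonpos_iff.1 (by linarith)
    simp at hdet
  · obtain rfl : q = 0 := abs_nonpos_iff.1 (by omega)
    obtain rfl : r = 0 := abs_nonpos_iff.1 (by omega)
    have hp2 : 4 * p ^ 2 ≤ b * c := by
      rw [← sq_abs p]; nlinarith [abs_nonneg p]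
    refine ⟨rfl, ?_, ?_⟩ <;> nlinarith
  · have hp2 : 4 * p ^ 2 ≤ b ^ 2 := by rw [← sq_abs p]; nlinarith [abs_nonneg p]
    have hq2 : 4 * q ^ 2 ≤ a ^ 2 := by rw [← sq_abs q]; nlinarith [abs_nonneg q]
    have hr2 : 4 * r ^ 2 ≤ a ^ 2 := by rw [← sq_abs r]; nlinarith [abs_nonneg r]
    have hpqr : -(a * a * b) ≤ 8 * p * q * r := by
      have : |2 * p * (2 * q) * (2 * r)| ≤ b * a * a := by
        rw [abs_mul, abs_mul, abs_mul 2 p, abs_mul 2 q, abs_mul 2 r, abs_two]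
        gcongr <;> nlinarith
      linarith [neg_abs_le (2 * p * (2 * q) * (2 * r))]
    have hspread : a * (3 * b * (b - a) + (c - b) * (4 * b - a)) ≤ 4 := by
      nlinarith [mul_le_mul_of_nonneg_left hp2 ha, mul_le_mul_of_nonneg_left hq2 (ha.trans hab),
        mul_le_mul_of_nonneg_left hr2 (ha.trans (hab.trans hbc))]
    have hspread_ge : 6 * (c - a) ≤ 3 * b * (b - a) + (c - b) * (4 * b - a) := by
      nlinarith [mul_nonneg (sub_nonneg.2 hab) (sub_nonneg.2 hbc)]
    have hca : c = a := by nlinarith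
    obtain rfl : b = a := by omega
    subst hca
    have := eq_one_of_reduced_cube hp hq hr (by linear_combination hdet)
    omega

theorem eq_one_of_reduced (hpb : 2 * |p| ≤ b) (hpc : 2 * |p| ≤ c) (hqa : 2 * |q| ≤ a)
    (hqc : 2 * |q| ≤ c) (hra : 2 * |r| ≤ a) (hrb : 2 * |r| ≤ b)
    (hdet : a * b * c + 2 * p * q * r - a * p ^ 2 - b * q ^ 2 - c * r ^ 2 = 1) :
    a = 1 ∧ b = 1 ∧ c = 1 := by
  wlog hab : a ≤ b generalizing a b c p q r
  · obtain ⟨hb, ha, hc⟩ := this hqa hqc hpb hpc hrb hra (by linear_combination hdet) (by omega)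
    exact ⟨ha, hb, hc⟩
  wlog hac : a ≤ c generalizing a b c p q r
  · obtain ⟨hc, hb, ha⟩ :=
      this hrb hra hqc hqa hpc hpb (by linear_combination hdet) (by omega) (by omega)
    exact ⟨ha, hb, hc⟩
  wlog hbc : b ≤ c generalizing a b c p q r
  · obtain ⟨ha, hc, hb⟩ :=
      this hpc hpb hra hrb hqa hqc (by linear_combination hdet) hac hab (by omega)
    exact ⟨ha, hb, hc⟩
  exact eq_one_of_reduced_of_le hab hbc hpb hqa hra hdet

end ReducedForm

theorem exists_eq_single_of_dotProduct_self_eq_one {ι : Type*} [Fintype ι] [DecidableEq ι]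
    {v : ι → ℤ} (hv : v ⬝ᵥ v = 1) : ∃ k, v = Pi.single k 1 ∨ v = -Pi.single k 1 := by
  obtain ⟨k, -, hk⟩ := Finset.exists_ne_zero_of_sum_ne_zero (hv ▸ one_ne_zero : v ⬝ᵥ v ≠ 0)
  have hsplit : v k * v k + ∑ i ∈ Finset.univ.erase k, v i * v i = 1 :=
    (Finset.add_sum_erase _ _ (Finset.mem_univ k)).trans hv
  have hrest_nonneg : 0 ≤ ∑ i ∈ Finset.univ.erase k, v i * v i :=
    Finset.sum_nonneg fun i _ => mul_self_nonneg (v i)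
  have hk_pos : 0 < v k * v k := (mul_self_nonneg (v k)).lt_of_ne' hk
  have hrest : ∀ i ∈ Finset.univ.erase k, v i * v i = 0 :=
    (Finset.sum_eq_zero_iff_of_nonneg fun i _ => mul_self_nonneg (v i)).1 (by omega)
  have hvk : v k * v k = 1 := by omega
  have hzero : ∀ i, i ≠ k → v i = 0 := fun i hik =>
    mul_self_eq_zero.1 (hrest i (Finset.mem_erase.2 ⟨hik, Finset.mem_univ i⟩))
  refine ⟨k, (mul_self_eq_one_iff.1 hvk).imp (fun h => ?_) (fun h => ?_)⟩ <;> ext i <;>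
    rcases eq_or_ne i k with rfl | hik <;> simp [*]

theorem enorm3_le_enorm3_iff {v w : Fin 3 → ℤ} : enorm3 v ≤ enorm3 w ↔ v ⬝ᵥ v ≤ w ⬝ᵥ w := by
  have hcast : ∀ u : Fin 3 → ℤ, ∑ i, ((u i : ℝ)) ^ 2 = ((u ⬝ᵥ u : ℤ) : ℝ) := fun u => by
    push_cast [dotProduct, sq]; rfl
  have hw : (0 : ℝ) ≤ ((w ⬝ᵥ w : ℤ) : ℝ) :=
    Int.cast_nonneg (Finset.sum_nonneg fun i _ => mul_self_nonneg (w i))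
  rw [enorm3, enorm3, hcast, hcast, Real.sqrt_le_sqrt_iff hw, Int.cast_le]

theorem vPrec.dotProduct_self_le {v w : Fin 3 → ℤ} (h : vPrec v w) : v ⬝ᵥ v ≤ w ⬝ᵥ w :=
  enorm3_le_enorm3_iff.1 (h.elim le_of_lt fun h => h.1.le)

theorem FundamentalPair.two_mul_abs_dotProduct_le {x y : Fin 3 → ℤ} (h : FundamentalPair x y) :
    2 * |x ⬝ᵥ y| ≤ x ⬝ᵥ x ∧ 2 * |x ⬝ᵥ y| ≤ y ⬝ᵥ y := by
  obtain ⟨h₁, h₂, h₃, h₄⟩ := h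
  have e₁ := h₁.dotProduct_self_le
  have e₂ := h₂.dotProduct_self_le
  have e₃ := h₃.dotProduct_self_le
  have e₄ := h₄.dotProduct_self_le
  simp only [add_dotProduct, dotProduct_add, sub_dotProduct, dotProduct_sub, dotProduct_comm y x]
    at e₁ e₂ e₃ e₄
  constructor <;> cases abs_cases (x ⬝ᵥ y) <;> linarith

theorem det_sq_eq_gram {R : Type*} [CommRing R] (u v w : Fin 3 → R) :
    (Matrix.of fun i j => ![u, v, w] j i).det ^ 2 =
      (u ⬝ᵥ u) * (v ⬝ᵥ v) * (w ⬝ᵥ w) + 2 * (v ⬝ᵥ w) * (u ⬝ᵥ w) * (u ⬝ᵥ v)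
        - (u ⬝ᵥ u) * (v ⬝ᵥ w) ^ 2 - (v ⬝ᵥ v) * (u ⬝ᵥ w) ^ 2 - (w ⬝ᵥ w) * (u ⬝ᵥ v) ^ 2 := by
  set A := Matrix.of fun i j => ![u, v, w] j i
  have hgram :
      Aᵀ * A = !![u ⬝ᵥ u, u ⬝ᵥ v, u ⬝ᵥ w; v ⬝ᵥ u, v ⬝ᵥ v, v ⬝ᵥ w; w ⬝ᵥ u, w ⬝ᵥ v, w ⬝ᵥ w] := by
    ext i j; fin_cases i <;> fin_cases j <;> rfl
  rw [sq]
  nth_rewrite 1 [← det_transpose A]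
  rw [← det_mul, hgram, det_fin_three]
  simp only [dotProduct_comm, of_apply, cons_val', cons_val_zero, cons_val_fin_one, cons_val_one,
    cons_val]
  ring

theorem IsZBasis.gram_det_eq_one {u v w : Fin 3 → ℤ} (hb : IsZBasis u v w) :
    (u ⬝ᵥ u) * (v ⬝ᵥ v) * (w ⬝ᵥ w) + 2 * (v ⬝ᵥ w) * (u ⬝ᵥ w) * (u ⬝ᵥ v)
      - (u ⬝ᵥ u) * (v ⬝ᵥ w) ^ 2 - (v ⬝ᵥ v) * (u ⬝ᵥ w) ^ 2 - (w ⬝ᵥ w) * (u ⬝ᵥ v) ^ 2 = 1 := by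
  rw [← det_sq_eq_gram]
  rcases hb with h | h <;> rw [h] <;> norm_num

/-- Main Theorem: if `{v₁, v₂, v₃}` is a `ℤ`-basis of `ℤ³` such that every pair
`{vᵢ, vⱼ}`, `i ≠ j`, is a fundamental pair, then `{v₁, v₂, v₃} ⊆ {±e₁, ±e₂, ±e₃}`. -/
theorem mainTheorem (v₁ v₂ v₃ : Fin 3 → ℤ) (hb : IsZBasis v₁ v₂ v₃)
    (hfund : ∀ i j : Fin 3, i ≠ j →
      FundamentalPair (![v₁, v₂, v₃] i) (![v₁, v₂, v₃] j)) :
    ∀ i : Fin 3, ∃ k : Fin 3,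
      ![v₁, v₂, v₃] i = Pi.single k 1 ∨ ![v₁, v₂, v₃] i = -Pi.single k 1 := by
  obtain ⟨hr₁, hr₂⟩ := (hfund 0 1 (by decide)).two_mul_abs_dotProduct_le
  obtain ⟨hq₁, hq₃⟩ := (hfund 0 2 (by decide)).two_mul_abs_dotProduct_le
  obtain ⟨hp₂, hp₃⟩ := (hfund 1 2 (by decide)).two_mul_abs_dotProduct_le
  obtain ⟨h₁, h₂, h₃⟩ := eq_one_of_reduced hp₂ hp₃ hq₁ hq₃ hr₁ hr₂ hb.gram_det_eq_one
  intro i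
  fin_cases i
  exacts [exists_eq_single_of_dotProduct_self_eq_one h₁,
    exists_eq_single_of_dotProduct_self_eq_one h₂, exists_eq_single_of_dotProduct_self_eq_one h₃]
end

section
/- Let {v₁, v₂, v₃} be a ℤ-basis of ℤ³ and let Σ = {v₁, v₂, v₃, v₁+v₂, v₁+v₃, v₁+v₂+v₃}. Then Σ consists of six distinct vectors, and no two distinct elements w, w′ of Σ satisfy w ≈ w′; consequently the relation ≺ restricts to a strict total order on Σ, i.e., the six vectors decorating a 0-cell of the well-rounded retract are well ordered with respect to ≺. (Lemma on well-ordering at a 0-cell.) -/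
noncomputable def precKey (v : Fin 3 → ℤ) : ℝ ×ₗ Lex (Fin 3 → ℤ) :=
  toLex (enorm3 v, toLex fun i => |v i|)

lemma vPrec_iff_precKey_lt {v w : Fin 3 → ℤ} : vPrec v w ↔ precKey v < precKey w := by
  simp only [vPrec, precKey, Prod.Lex.toLex_lt_toLex]
  exact or_congr_right (and_congr_right fun _ => exists_congr fun _ => and_comm)

lemma enorm3_eq_of_vApprox {v w : Fin 3 → ℤ} (h : vApprox v w) : enorm3 v = enorm3 w := by
  simp only [enorm3]
  congr 1
  refine Finset.sum_congr rfl fun i _ => ?_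
  rw [← sq_abs, ← Int.cast_abs, h i, Int.cast_abs, sq_abs]

lemma precKey_eq_iff {v w : Fin 3 → ℤ} : precKey v = precKey w ↔ vApprox v w := by
  refine ⟨fun h i => congrFun (congrArg (fun k => ofLex (ofLex k).2) h) i, fun h => ?_⟩
  simp only [precKey, enorm3_eq_of_vApprox h]
  exact congrArg _ (congrArg _ (congrArg _ (funext h)))

lemma vPrec_trans {u v w : Fin 3 → ℤ} (huv : vPrec u v) (hvw : vPrec v w) : vPrec u w := by
  rw [vPrec_iff_precKey_lt] at *
  exact huv.trans hvw

lemma vPrec_iff_not_vPrec_of_not_vApprox {v w : Fin 3 → ℤ} (h : ¬ vApprox v w) :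
    vPrec v w ↔ ¬ vPrec w v := by
  rw [← precKey_eq_iff] at h
  simp only [vPrec_iff_precKey_lt]
  exact ⟨lt_asymm, (lt_or_gt_of_ne h).resolve_right⟩

lemma intCast_zmod_two_eq_of_abs_eq {a b : ℤ} (h : |a| = |b|) : (a : ZMod 2) = b := by
  rcases abs_eq_abs.mp h with rfl | rfl
  · rfl
  · rw [Int.cast_neg, ZMod.neg_eq_self_mod_two]

def modTwo : (Fin 3 → ℤ) →+ (Fin 3 → ZMod 2) :=
  (Int.castAddHom (ZMod 2)).compLeft (Fin 3)

lemma modTwo_eq_of_vApprox {v w : Fin 3 → ℤ} (h : vApprox v w) : modTwo v = modTwo w :=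
  funext fun i => intCast_zmod_two_eq_of_abs_eq (h i)

lemma IsZBasis.det_modTwo_ne_zero {v₁ v₂ v₃ : Fin 3 → ℤ} (hb : IsZBasis v₁ v₂ v₃) :
    (Matrix.of fun i j => ![modTwo v₁, modTwo v₂, modTwo v₃] j i).det ≠ 0 := by
  have hmap : (Matrix.of fun i j => ![modTwo v₁, modTwo v₂, modTwo v₃] j i) =
      (Int.castRingHom (ZMod 2)).mapMatrix (Matrix.of fun i j => ![v₁, v₂, v₃] j i) := by
    ext i j
    fin_cases j <;> rfl
  rw [hmap, ← RingHom.map_det]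
  rcases hb with h | h <;> rw [h] <;> decide

lemma nodup_zeroCell_of_det_ne_zero : ∀ a b c : Fin 3 → ZMod 2,
    (Matrix.of fun i j => ![a, b, c] j i).det ≠ 0 →
    [a, b, c, a + b, a + c, a + b + c].Nodup := by
  decide

/-- Lemma (well-ordering at a 0-cell): for a `ℤ`-basis `{v₁, v₂, v₃}` of `ℤ³`, the six
vectors `Σ = {v₁, v₂, v₃, v₁+v₂, v₁+v₃, v₁+v₂+v₃}` decorating a 0-cell of the
well-rounded retract are distinct, no two distinct ones are `≈`-equivalent, and hence
`≺` restricts to a strict total order on `Σ`. -/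
theorem zeroCellWellOrdered (v₁ v₂ v₃ : Fin 3 → ℤ) (hb : IsZBasis v₁ v₂ v₃) :
    ∀ L : List (Fin 3 → ℤ),
      L = [v₁, v₂, v₃, v₁ + v₂, v₁ + v₃, v₁ + v₂ + v₃] →
      L.Nodup ∧
      (∀ w ∈ L, ∀ w' ∈ L, w ≠ w' → ¬ vApprox w w') ∧
      (∀ w ∈ L, ∀ w' ∈ L, w ≠ w' → (vPrec w w' ↔ ¬ vPrec w' w)) ∧
      (∀ a ∈ L, ∀ b ∈ L, ∀ c ∈ L, vPrec a b → vPrec b c → vPrec a c) := by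
  intro L hL
  have hmod : (L.map modTwo).Nodup := by
    simpa only [hL, List.map, map_add] using
      nodup_zeroCell_of_det_ne_zero _ _ _ hb.det_modTwo_ne_zero
  have happrox : ∀ w ∈ L, ∀ w' ∈ L, w ≠ w' → ¬ vApprox w w' :=
    fun w hw w' hw' hne h => hne (List.inj_on_of_nodup_map hmod hw hw' (modTwo_eq_of_vApprox h))
  exact ⟨hmod.of_map _, happrox,
    fun w hw w' hw' hne => vPrec_iff_not_vPrec_of_not_vApprox (happrox w hw w' hw' hne),
    fun _ _ _ _ _ _ => vPrec_trans⟩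
end

section
/- Let {v₁, v₂, v₃} be a ℤ-basis of ℤ³ and let Σ = {v₁, v₂, v₃, v₁+v₂, v₁+v₃, v₁+v₂+v₃}. For any two distinct subsets A, B ⊆ Σ with |A| = |B|, exactly one of A ≺ B or B ≺ A holds under the induced ordering on finite collections of vectors. (Corollary: all cubes incident at a point are well ordered under the induced ordering.) -/
/-- `v ⪯ w` : `v ≺ w` or `v ≈ w`. -/
def vPrecEq (v w : Fin 3 → ℤ) : Prop := vPrec v w ∨ vApprox v w

/-- The induced ordering `A ≺ B` on finite collections of vectors, defined recursively:
compare `≺`-minimal elements, and if they are `≈`-equivalent remove them and recurse. -/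
inductive CollPrec : Multiset (Fin 3 → ℤ) → Multiset (Fin 3 → ℤ) → Prop
  | strict {A B : Multiset (Fin 3 → ℤ)} {a b : Fin 3 → ℤ}
      (ha : a ∈ A) (hb : b ∈ B)
      (hamin : ∀ x ∈ A, vPrecEq a x) (hbmin : ∀ x ∈ B, vPrecEq b x)
      (hab : vPrec a b) : CollPrec A B
  | step {A B : Multiset (Fin 3 → ℤ)} {a b : Fin 3 → ℤ}
      (ha : a ∈ A) (hb : b ∈ B)
      (hamin : ∀ x ∈ A, vPrecEq a x) (hbmin : ∀ x ∈ B, vPrecEq b x)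
      (hab : vApprox a b) (h : CollPrec (A.erase a) (B.erase b)) : CollPrec A B

/-!
Order vectors by the key `(‖v‖², |v₀|, |v₁|, |v₂|)` in the lexicographic order: `≺` and `≈` are
exactly `<` and `=` on keys, so for collections of equal size `A ≺ B` says precisely that the
sorted key list of `A` is lexicographically smaller than that of `B`. Lists are linearly ordered,
hence exactly one of `A ≺ B`, `B ≺ A` holds unless `A` and `B` have the same keys. On `Σ` the key is
injective: if `x, y ∈ Σ` have entries of equal absolute values then `x ≡ y (mod 2)`, and since the
basis matrix is invertible over `ℤ`, the `0/1` coordinate vectors of `x` and `y` are congruent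
modulo `2`, hence equal.
-/

open Matrix

def vKey (v : Fin 3 → ℤ) : ℤ ×ₗ Lex (Fin 3 → ℤ) :=
  toLex (∑ i, v i ^ 2, toLex fun i => |v i|)

section Key

variable {v w : Fin 3 → ℤ}

lemma enorm3_eq_sqrt : enorm3 v = √((∑ i, v i ^ 2 : ℤ) : ℝ) := by
  simp only [enorm3, Int.cast_sum, Int.cast_pow]

lemma enorm3_lt_enorm3_iff :
    enorm3 v < enorm3 w ↔ ∑ i, v i ^ 2 < ∑ i, w i ^ 2 := by
  rw [enorm3_eq_sqrt, enorm3_eq_sqrt, Real.sqrt_lt_sqrt_iff (by positivity), Int.cast_lt]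

lemma enorm3_eq_enorm3_iff :
    enorm3 v = enorm3 w ↔ ∑ i, v i ^ 2 = ∑ i, w i ^ 2 := by
  rw [enorm3_eq_sqrt, enorm3_eq_sqrt, Real.sqrt_inj (by positivity) (by positivity), Int.cast_inj]

lemma vPrec_iff_vKey_lt : vPrec v w ↔ vKey v < vKey w := by
  simp only [vPrec, vKey, Prod.Lex.lt_iff, enorm3_lt_enorm3_iff, enorm3_eq_enorm3_iff]
  exact or_congr_right <| and_congr_right fun _ =>
    exists_congr fun _ => and_comm

lemma vApprox_iff_vKey_eq : vApprox v w ↔ vKey v = vKey w := by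
  simp only [vApprox, vKey, toLex_inj, Prod.mk.injEq, funext_iff]
  refine ⟨fun h => ⟨Finset.sum_congr rfl fun i _ => ?_, h⟩, And.right⟩
  rw [← sq_abs (v i), h i, sq_abs]

lemma vPrecEq_iff_vKey_le : vPrecEq v w ↔ vKey v ≤ vKey w := by
  rw [le_iff_lt_or_eq, vPrecEq, vPrec_iff_vKey_lt, vApprox_iff_vKey_eq]

end Key

noncomputable def sortedKeys (A : Multiset (Fin 3 → ℤ)) : List (ℤ ×ₗ Lex (Fin 3 → ℤ)) :=
  (A.map vKey).sort

section SortedKeys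

variable {A B : Multiset (Fin 3 → ℤ)}

lemma exists_vPrecEq_minimal (hA : A ≠ 0) :
    ∃ a ∈ A, ∀ x ∈ A, vPrecEq a x := by
  obtain ⟨a, ha, hmin⟩ :=
    A.toFinset.exists_min_image vKey (Multiset.toFinset_nonempty.mpr hA)
  exact ⟨a, Multiset.mem_toFinset.mp ha, fun x hx =>
    vPrecEq_iff_vKey_le.mpr (hmin x (Multiset.mem_toFinset.mpr hx))⟩

lemma sortedKeys_eq_cons {a : Fin 3 → ℤ} (ha : a ∈ A)
    (hmin : ∀ x ∈ A, vPrecEq a x) : sortedKeys A = vKey a :: sortedKeys (A.erase a) := by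
  rw [sortedKeys, ← Multiset.cons_erase ha, Multiset.map_cons, Multiset.sort_cons (r := (· ≤ ·)),
    Multiset.erase_cons_head, sortedKeys]
  simp only [Multiset.mem_map]
  rintro _ ⟨x, hx, rfl⟩
  exact vPrecEq_iff_vKey_le.mp (hmin x (Multiset.mem_of_mem_erase hx))

lemma sortedKeys_lt_of_collPrec (h : CollPrec A B) :
    sortedKeys A < sortedKeys B := by
  induction h with
  | strict ha hb hamin hbmin hab =>
    rw [sortedKeys_eq_cons ha hamin, sortedKeys_eq_cons hb hbmin]
    exact List.Lex.rel (vPrec_iff_vKey_lt.mp hab)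
  | step ha hb hamin hbmin hab _ ih =>
    rw [sortedKeys_eq_cons ha hamin, sortedKeys_eq_cons hb hbmin, vApprox_iff_vKey_eq.mp hab]
    exact List.Lex.cons ih

lemma collPrec_of_sortedKeys_lt (hcard : A.card = B.card)
    (h : sortedKeys A < sortedKeys B) : CollPrec A B := by
  obtain ⟨n, hA⟩ : ∃ n, A.card = n := ⟨_, rfl⟩
  induction n generalizing A B with
  | zero =>
    obtain rfl := Multiset.card_eq_zero.mp (hcard.symm.trans hA)
    obtain rfl := Multiset.card_eq_zero.mp hA
    exact absurd h (lt_irrefl _)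
  | succ n ih =>
    obtain ⟨a, ha, hamin⟩ := exists_vPrecEq_minimal (A := A) (Multiset.card_pos.mp (by omega))
    obtain ⟨b, hb, hbmin⟩ := exists_vPrecEq_minimal (A := B) (Multiset.card_pos.mp (by omega))
    rw [sortedKeys_eq_cons ha hamin, sortedKeys_eq_cons hb hbmin, List.cons_lt_cons_iff] at h
    rcases h with hlt | ⟨heq, htail⟩
    · exact .strict ha hb hamin hbmin (vPrec_iff_vKey_lt.mpr hlt)
    · refine .step ha hb hamin hbmin (vApprox_iff_vKey_eq.mpr heq) (ih ?_ htail ?_) <;>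
        simp only [Multiset.card_erase_of_mem, ha, hb, Nat.pred_eq_sub_one] <;> omega

lemma collPrec_iff_sortedKeys_lt (hcard : A.card = B.card) :
    CollPrec A B ↔ sortedKeys A < sortedKeys B :=
  ⟨sortedKeys_lt_of_collPrec, collPrec_of_sortedKeys_lt hcard⟩

lemma map_vKey_eq_of_sortedKeys_eq (h : sortedKeys A = sortedKeys B) :
    A.map vKey = B.map vKey := by
  rw [← Multiset.sort_eq (A.map vKey) (· ≤ ·), ← Multiset.sort_eq (B.map vKey) (· ≤ ·)]
  exact congrArg _ h

end SortedKeys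

lemma Finset.eq_of_map_val_eq_of_injOn {α β : Type*} {f : α → β} {s : Set α}
    (hf : Set.InjOn f s) {A B : Finset α} (hA : ↑A ⊆ s) (hB : ↑B ⊆ s)
    (h : A.val.map f = B.val.map f) : A = B := by
  classical
  have himage : A.image f = B.image f := by simp only [Finset.image, h]
  rw [← Finset.coe_inj, ← hf.image_eq_image_iff hA hB, ← Finset.coe_image, himage,
    Finset.coe_image]

section Basis

lemma Matrix.dvd_of_dvd_mulVec {n R : Type*} [Fintype n] [DecidableEq n] [CommRing R]
    {M : Matrix n n R} (hM : IsUnit M.det) {d : R} {c : n → R} (h : ∀ i, d ∣ (M *ᵥ c) i)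
    (j : n) : d ∣ c j := by
  rw [← one_mulVec c, ← M.nonsing_inv_mul hM, ← mulVec_mulVec]
  exact Finset.dvd_sum fun i _ => (h i).mul_left _

lemma two_dvd_sub_of_abs_eq {a b : ℤ} (h : |a| = |b|) : 2 ∣ a - b := by
  rcases abs_eq_abs.mp h with rfl | rfl <;> omega

lemma eq_of_vApprox_mulVec {M : Matrix (Fin 3) (Fin 3) ℤ} (hM : IsUnit M.det)
    {p q : Fin 3 → ℤ} (hp : ∀ j, p j = 0 ∨ p j = 1) (hq : ∀ j, q j = 0 ∨ q j = 1)
    (h : vApprox (M *ᵥ p) (M *ᵥ q)) : p = q := by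
  have hdvd : ∀ i, 2 ∣ (M *ᵥ (p - q)) i := fun i => by
    rw [mulVec_sub, Pi.sub_apply]
    exact two_dvd_sub_of_abs_eq (h i)
  funext j
  have := dvd_of_dvd_mulVec hM hdvd j
  rcases hp j with hpj | hpj <;> rcases hq j with hqj | hqj <;>
    simp only [Pi.sub_apply, hpj, hqj] at this ⊢ <;> omega

lemma basisMatrix_mulVec (v₁ v₂ v₃ p : Fin 3 → ℤ) :
    (of fun i j => ![v₁, v₂, v₃] j i) *ᵥ p = p 0 • v₁ + p 1 • v₂ + p 2 • v₃ := by
  ext i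
  simp [mulVec, dotProduct, Fin.sum_univ_three, mul_comm]

lemma vKey_injOn_cubeVertices {v₁ v₂ v₃ : Fin 3 → ℤ} (hb : IsZBasis v₁ v₂ v₃) :
    Set.InjOn vKey ({v₁, v₂, v₃, v₁ + v₂, v₁ + v₃, v₁ + v₂ + v₃} : Finset (Fin 3 → ℤ)) := by
  have hcoord : ∀ x ∈ ({v₁, v₂, v₃, v₁ + v₂, v₁ + v₃, v₁ + v₂ + v₃} : Finset (Fin 3 → ℤ)),
      ∃ p : Fin 3 → ℤ, (∀ j, p j = 0 ∨ p j = 1) ∧ x = (of fun i j => ![v₁, v₂, v₃] j i) *ᵥ p := by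
    simp only [Finset.mem_insert, Finset.mem_singleton, basisMatrix_mulVec]
    rintro x (rfl | rfl | rfl | rfl | rfl | rfl)
    · exact ⟨![1, 0, 0], by decide, by simp⟩
    · exact ⟨![0, 1, 0], by decide, by simp⟩
    · exact ⟨![0, 0, 1], by decide, by simp⟩
    · exact ⟨![1, 1, 0], by decide, by simp⟩
    · exact ⟨![1, 0, 1], by decide, by simp⟩
    · exact ⟨![1, 1, 1], by decide, by simp [add_assoc]⟩
  intro x hx y hy hxy
  obtain ⟨p, hp, rfl⟩ := hcoord x hx
  obtain ⟨q, hq, rfl⟩ := hcoord y hy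
  rw [eq_of_vApprox_mulVec (Int.isUnit_iff.mpr hb) hp hq (vApprox_iff_vKey_eq.mpr hxy)]

end Basis

/-- Corollary: for a `ℤ`-basis `{v₁, v₂, v₃}` of `ℤ³` and
`Σ = {v₁, v₂, v₃, v₁+v₂, v₁+v₃, v₁+v₂+v₃}`, any two distinct equal-sized subsets
`A, B ⊆ Σ` satisfy exactly one of `A ≺ B`, `B ≺ A` under the induced ordering. -/
theorem cubesWellOrdered (v₁ v₂ v₃ : Fin 3 → ℤ) (hb : IsZBasis v₁ v₂ v₃)
    (S : Finset (Fin 3 → ℤ))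
    (hS : S = {v₁, v₂, v₃, v₁ + v₂, v₁ + v₃, v₁ + v₂ + v₃})
    (A B : Finset (Fin 3 → ℤ)) (hA : A ⊆ S) (hB : B ⊆ S)
    (hcard : A.card = B.card) (hne : A ≠ B) :
    Xor' (CollPrec A.val B.val) (CollPrec B.val A.val) := by
  have hinj : Set.InjOn vKey S := hS ▸ vKey_injOn_cubeVertices hb
  have hkeys : sortedKeys A.val ≠ sortedKeys B.val := fun h =>
    hne (Finset.eq_of_map_val_eq_of_injOn hinj (Finset.coe_subset.mpr hA)
      (Finset.coe_subset.mpr hB) (map_vKey_eq_of_sortedKeys_eq h))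
  rw [Xor', collPrec_iff_sortedKeys_lt hcard, collPrec_iff_sortedKeys_lt hcard.symm]
  rcases hkeys.lt_or_gt with h | h
  · exact Or.inl ⟨h, h.asymm⟩
  · exact Or.inr ⟨h, h.asymm⟩
end

section
/- Let v₁, v₂, v₃ ∈ ℝ^m be nonzero vectors such that ‖v_i + v_j‖ ≤ max{‖v_i‖, ‖v_j‖} for all 1 ≤ i < j ≤ 3. Then ‖v₁ + v₂ + v₃‖ < max{‖v₁‖, ‖v₂‖, ‖v₃‖}. (Lemma ConnectedTwo.) -/
/-!
Write `a, b, c` for the norms of the three vectors. Expanding `‖x + y‖² ≤ max ‖x‖ ‖y‖²` shows that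
each hypothesis forces `2⟪x, y⟫ ≤ -(min ‖x‖ ‖y‖)²`. Expanding `‖v₁ + v₂ + v₃‖²` therefore gives
`a² + b² + c² - min(a, b)² - min(a, c)² - min(b, c)²`, which equals (largest norm)² - (smallest norm)²,
and the smallest norm is positive.
-/

open RealInnerProductSpace

section InnerProductSpace

variable {F : Type*} [NormedAddCommGroup F] [InnerProductSpace ℝ F]

theorem two_inner_le_neg_min_sq_of_norm_add_le_max {x y : F} (h : ‖x + y‖ ≤ max ‖x‖ ‖y‖) :
    2 * ⟪x, y⟫ ≤ -min ‖x‖ ‖y‖ ^ 2 := by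
  have hsq : ‖x‖ ^ 2 + 2 * ⟪x, y⟫ + ‖y‖ ^ 2 ≤ max ‖x‖ ‖y‖ ^ 2 := by
    rw [← norm_add_sq_real]
    exact pow_le_pow_left₀ (norm_nonneg _) h 2
  rcases le_total ‖x‖ ‖y‖ with hxy | hxy
  · rw [max_eq_right hxy, min_eq_left hxy] at *; linarith
  · rw [max_eq_left hxy, min_eq_right hxy] at *; linarith

theorem norm_add_add_sq_real (x y z : F) :
    ‖x + y + z‖ ^ 2 = ‖x‖ ^ 2 + ‖y‖ ^ 2 + ‖z‖ ^ 2 + 2 * ⟪x, y⟫ + 2 * ⟪x, z⟫ + 2 * ⟪y, z⟫ := by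
  rw [norm_add_sq_real, norm_add_sq_real, inner_add_left]
  ring

end InnerProductSpace

theorem sq_add_sq_add_sq_sub_min_sq_lt_max_sq {a b c : ℝ} (ha : 0 < a) (hb : 0 < b) (hc : 0 < c) :
    a ^ 2 + b ^ 2 + c ^ 2 - min a b ^ 2 - min a c ^ 2 - min b c ^ 2 < max a (max b c) ^ 2 := by
  rcases le_total a b with hab | hab <;> rcases le_total a c with hac | hac <;>
    rcases le_total b c with hbc | hbc <;>
    simp only [min_eq_left, min_eq_right, max_eq_left, max_eq_right, *] <;>
    nlinarith

/-- Lemma (ConnectedTwo): if `v₁, v₂, v₃ ∈ ℝ^m` are nonzero with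
`‖v_i + v_j‖ ≤ max ‖v_i‖ ‖v_j‖` for all `1 ≤ i < j ≤ 3`, then
`‖v₁ + v₂ + v₃‖ < max {‖v₁‖, ‖v₂‖, ‖v₃‖}`. -/
theorem connectedTwo (m : ℕ) (v₁ v₂ v₃ : EuclideanSpace ℝ (Fin m))
    (h₁ : v₁ ≠ 0) (h₂ : v₂ ≠ 0) (h₃ : v₃ ≠ 0)
    (h12 : ‖v₁ + v₂‖ ≤ max ‖v₁‖ ‖v₂‖)
    (h13 : ‖v₁ + v₃‖ ≤ max ‖v₁‖ ‖v₃‖)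
    (h23 : ‖v₂ + v₃‖ ≤ max ‖v₂‖ ‖v₃‖) :
    ‖v₁ + v₂ + v₃‖ < max ‖v₁‖ (max ‖v₂‖ ‖v₃‖) := by
  have key := sq_add_sq_add_sq_sub_min_sq_lt_max_sq
    (norm_pos_iff.mpr h₁) (norm_pos_iff.mpr h₂) (norm_pos_iff.mpr h₃)
  refine lt_of_pow_lt_pow_left₀ 2 ((norm_nonneg v₁).trans (le_max_left _ _)) ?_
  rw [norm_add_add_sq_real]
  linarith [two_inner_le_neg_min_sq_of_norm_add_le_max h12,
    two_inner_le_neg_min_sq_of_norm_add_le_max h13, two_inner_le_neg_min_sq_of_norm_add_le_max h23]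
end

section
/- Let g ∈ SL₂(ℤ) have columns v₁, v₂ ∈ ℤ². Assume that, as unordered pairs of integer vectors taken up to sign, {v₁, v₂} is none of the five pairs {e₁, e₂}, {e₁, e₁+e₂}, {e₂, e₁+e₂}, {e₁, e₁−e₂}, {e₂, e₁−e₂} (i.e., g neither stabilizes the fundamental arc of the well-rounded retract in the upper half-plane nor maps it to one of its neighboring arcs). Then: (1) the three norms ‖v₁‖, ‖v₂‖, ‖v₁+v₂‖ are pairwise distinct, and the three norms ‖v₁‖, ‖v₂‖, ‖v₁−v₂‖ are pairwise distinct (so each of the sets {v₁, v₂, v₁+v₂} and {v₁, v₂, v₁−v₂} is totally ordered by Euclidean norm); and (2) min{‖v₁+v₂‖, ‖v₁−v₂‖} < max{‖v₁‖, ‖v₂‖}. (Lemma NormRankOne.) -/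
/-!
Write `n = ‖v₁‖²`, `m = ‖v₂‖²` and `s = ⟨v₁, v₂⟩`. Lagrange's identity and `det g = 1` give
`n m = s² + 1`, while `‖v₁ ± v₂‖² = n + m ± 2s`. If `n = m`, then `(n - s)(n + s) = 1` forces
`n = m = 1`. If `‖v₁‖` or `‖v₂‖` equals `‖v₁ ± v₂‖`, then `m = ∓2s` (or `n = ∓2s`), so `s ∣ 1`
and `{n, m} = {1, 2}`. If `min ‖v₁ ± v₂‖ ≥ max (‖v₁‖, ‖v₂‖)`, then `|2s| ≤ n, m`, so
`4s² ≤ s² + 1`, `s = 0` and again `n = m = 1`. Integer vectors of squared norm `1` and `2` are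
`±e₁, ±e₂` and `±e₁ ± e₂`, so these cases are exactly the five excluded pairs.
-/

/-- The Euclidean norm of an integer vector in `ℤ²`, regarded as a vector in `ℝ²`. -/
noncomputable def enorm2 (v : Fin 2 → ℤ) : ℝ :=
  Real.sqrt (∑ i, ((v i : ℝ)) ^ 2)

/-- The unordered pairs `{a, b}` and `{c, d}` of integer vectors coincide up to sign. -/
def PairEquivUpToSign (a b c d : Fin 2 → ℤ) : Prop :=
  ((a = c ∨ a = -c) ∧ (b = d ∨ b = -d)) ∨ ((a = d ∨ a = -d) ∧ (b = c ∨ b = -c))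

open Matrix

namespace Int

theorem eq_one_of_mul_self_eq_sq_add_one {n s : ℤ} (hn : 0 ≤ n) (h : n * n = s ^ 2 + 1) :
    n = 1 := by
  have hprod : (n - s) * (n + s) = 1 := by linear_combination h
  rcases mul_eq_one_iff_eq_one_or_neg_one.mp hprod with ⟨h₁, h₂⟩ | ⟨h₁, h₂⟩ <;> omega

theorem eq_one_and_eq_two_of_mul_eq_sq_add_one {n m s : ℤ} (hn : 0 ≤ n)
    (h : n * m = s ^ 2 + 1) (hm : m + 2 * s = 0) : n = 1 ∧ m = 2 := by
  have hs : s ∣ 1 := ⟨-2 * n - s, by linear_combination -h + n * hm⟩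
  rcases isUnit_iff.mp (isUnit_of_dvd_one hs) with rfl | rfl
  · nlinarith
  · obtain rfl : m = 2 := by linarith
    omega

theorem eq_zero_of_mul_eq_sq_add_one {n m s : ℤ} (h : n * m = s ^ 2 + 1)
    (hn : |2 * s| ≤ n) (hm : |2 * s| ≤ m) : s = 0 := by
  have : |2 * s| * |2 * s| ≤ n * m := mul_le_mul hn hm (abs_nonneg _) ((abs_nonneg _).trans hn)
  rw [abs_mul_abs_self] at this
  nlinarith

theorem ne_and_min_lt_max_of_mul_eq_sq_add_one {n m s : ℤ} (hn : 0 ≤ n) (hm : 0 ≤ m)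
    (h : n * m = s ^ 2 + 1) (h11 : ¬(n = 1 ∧ m = 1)) (h12 : ¬(n = 1 ∧ m = 2))
    (h21 : ¬(n = 2 ∧ m = 1)) :
    (n ≠ m ∧ n ≠ n + 2 * s + m ∧ m ≠ n + 2 * s + m) ∧
      (n ≠ n - 2 * s + m ∧ m ≠ n - 2 * s + m) ∧ min (n + 2 * s + m) (n - 2 * s + m) < max n m := by
  have h' : m * n = s ^ 2 + 1 := by rw [mul_comm, h]
  have hneg : n * m = (-s) ^ 2 + 1 := by rw [neg_sq, h]
  have hneg' : m * n = (-s) ^ 2 + 1 := by rw [neg_sq, h']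
  refine ⟨⟨?_, ?_, ?_⟩, ⟨?_, ?_⟩, ?_⟩
  · rintro rfl
    have hn1 := eq_one_of_mul_self_eq_sq_add_one hn h
    exact h11 ⟨hn1, hn1⟩
  · intro heq
    exact h12 (eq_one_and_eq_two_of_mul_eq_sq_add_one hn h (by linarith))
  · intro heq
    exact h21 (eq_one_and_eq_two_of_mul_eq_sq_add_one hm h' (by linarith)).symm
  · intro heq
    exact h12 (eq_one_and_eq_two_of_mul_eq_sq_add_one hn hneg (by linarith))
  · intro heq
    exact h21 (eq_one_and_eq_two_of_mul_eq_sq_add_one hm hneg' (by linarith)).symm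
  · by_contra! hle
    rw [max_le_iff, le_min_iff, le_min_iff] at hle
    have hs : s = 0 := eq_zero_of_mul_eq_sq_add_one h
      (abs_le.mpr ⟨by linarith, by linarith⟩) (abs_le.mpr ⟨by linarith, by linarith⟩)
    rw [hs] at h
    have hn1 := eq_one_of_mul_eq_one_right hn (by simpa using h)
    exact h11 ⟨hn1, by simpa [hn1] using h⟩

end Int

section DotProduct

variable {R ι : Type*} [CommRing R] [Fintype ι]

theorem add_dotProduct_add_self (v w : ι → R) :
    (v + w) ⬝ᵥ (v + w) = v ⬝ᵥ v + 2 * (v ⬝ᵥ w) + w ⬝ᵥ w := by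
  simp only [add_dotProduct, dotProduct_add, dotProduct_comm w v]
  ring

theorem sub_dotProduct_sub_self (v w : ι → R) :
    (v - w) ⬝ᵥ (v - w) = v ⬝ᵥ v - 2 * (v ⬝ᵥ w) + w ⬝ᵥ w := by
  simp only [sub_dotProduct, dotProduct_sub, dotProduct_comm w v]
  ring

theorem dotProduct_self_mul_dotProduct_self_fin_two (v w : Fin 2 → R) :
    (v ⬝ᵥ v) * (w ⬝ᵥ w) = (v ⬝ᵥ w) ^ 2 + (v 0 * w 1 - v 1 * w 0) ^ 2 := by
  simp only [dotProduct, Fin.sum_univ_two]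
  ring

end DotProduct

theorem dotProduct_self_nonneg {R ι : Type*} [Ring R] [LinearOrder R] [IsStrictOrderedRing R]
    [Fintype ι] (v : ι → R) : 0 ≤ v ⬝ᵥ v :=
  Finset.sum_nonneg fun i _ => mul_self_nonneg (v i)

theorem enorm2_eq_sqrt_dotProduct_self (v : Fin 2 → ℤ) : enorm2 v = √((v ⬝ᵥ v : ℤ) : ℝ) := by
  simp [enorm2, dotProduct, sq]

theorem enorm2_eq_enorm2_iff {v w : Fin 2 → ℤ} : enorm2 v = enorm2 w ↔ v ⬝ᵥ v = w ⬝ᵥ w := by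
  rw [enorm2_eq_sqrt_dotProduct_self, enorm2_eq_sqrt_dotProduct_self,
    Real.sqrt_inj (by exact_mod_cast dotProduct_self_nonneg v)
      (by exact_mod_cast dotProduct_self_nonneg w), Int.cast_inj]

theorem enorm2_lt_enorm2_iff {v w : Fin 2 → ℤ} : enorm2 v < enorm2 w ↔ v ⬝ᵥ v < w ⬝ᵥ w := by
  rw [enorm2_eq_sqrt_dotProduct_self, enorm2_eq_sqrt_dotProduct_self,
    Real.sqrt_lt_sqrt_iff (by exact_mod_cast dotProduct_self_nonneg v), Int.cast_lt]

theorem PairEquivUpToSign.swap {a b c d : Fin 2 → ℤ} (h : PairEquivUpToSign a b c d) :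
    PairEquivUpToSign b a c d := by
  unfold PairEquivUpToSign at *
  tauto

theorem abs_le_one_of_dotProduct_self_le_two {ι : Type*} [Fintype ι] {v : ι → ℤ}
    (h : v ⬝ᵥ v ≤ 2) (i : ι) : |v i| ≤ 1 := by
  have hi : v i * v i ≤ v ⬝ᵥ v :=
    Finset.single_le_sum (fun j _ => mul_self_nonneg (v j)) (Finset.mem_univ i)
  rw [← abs_mul_abs_self] at hi
  nlinarith [abs_nonneg (v i)]

theorem exists_eq_vecCons_of_dotProduct_self_le_two {v : Fin 2 → ℤ} (h : v ⬝ᵥ v ≤ 2) :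
    ∃ a b : ℤ, (-1 ≤ a ∧ a ≤ 1) ∧ (-1 ≤ b ∧ b ≤ 1) ∧ v = ![a, b] :=
  ⟨v 0, v 1, abs_le.mp (abs_le_one_of_dotProduct_self_le_two h 0),
    abs_le.mp (abs_le_one_of_dotProduct_self_le_two h 1), by ext i; fin_cases i <;> rfl⟩

theorem pairEquivUpToSign_basis_of_orthonormal {v w : Fin 2 → ℤ} (hv : v ⬝ᵥ v = 1)
    (hw : w ⬝ᵥ w = 1) (hvw : v ⬝ᵥ w = 0) : PairEquivUpToSign v w ![1, 0] ![0, 1] := by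
  obtain ⟨a, b, ⟨ha, ha'⟩, ⟨hb, hb'⟩, rfl⟩ :=
    exists_eq_vecCons_of_dotProduct_self_le_two (hv.trans_le one_le_two)
  obtain ⟨c, d, ⟨hc, hc'⟩, ⟨hd, hd'⟩, rfl⟩ :=
    exists_eq_vecCons_of_dotProduct_self_le_two (hw.trans_le one_le_two)
  unfold PairEquivUpToSign
  interval_cases a <;> interval_cases b <;> interval_cases c <;> interval_cases d <;>
    simp_all [dotProduct]

theorem pairEquivUpToSign_adjacent_of_dotProduct_self_eq_one_two {v w : Fin 2 → ℤ}
    (hv : v ⬝ᵥ v = 1) (hw : w ⬝ᵥ w = 2) :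
    PairEquivUpToSign v w ![1, 0] (![1, 0] + ![0, 1]) ∨
      PairEquivUpToSign v w ![0, 1] (![1, 0] + ![0, 1]) ∨
      PairEquivUpToSign v w ![1, 0] (![1, 0] - ![0, 1]) ∨
      PairEquivUpToSign v w ![0, 1] (![1, 0] - ![0, 1]) := by
  obtain ⟨a, b, ⟨ha, ha'⟩, ⟨hb, hb'⟩, rfl⟩ :=
    exists_eq_vecCons_of_dotProduct_self_le_two (hv.trans_le one_le_two)
  obtain ⟨c, d, ⟨hc, hc'⟩, ⟨hd, hd'⟩, rfl⟩ := exists_eq_vecCons_of_dotProduct_self_le_two hw.le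
  unfold PairEquivUpToSign
  interval_cases a <;> interval_cases b <;> interval_cases c <;> interval_cases d <;>
    simp_all [dotProduct]

/-- Lemma (NormRankOne): let `g ∈ SL₂(ℤ)` have columns `v₁, v₂`.  If, as an unordered
pair up to sign, `{v₁, v₂}` is none of `{e₁, e₂}`, `{e₁, e₁+e₂}`, `{e₂, e₁+e₂}`,
`{e₁, e₁-e₂}`, `{e₂, e₁-e₂}`, then the sets `{v₁, v₂, v₁+v₂}` and `{v₁, v₂, v₁-v₂}` are
totally ordered by Euclidean norm, and `min ‖v₁ ± v₂‖ < max ‖v₁‖ ‖v₂‖`. -/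
theorem normRankOne (g : Matrix (Fin 2) (Fin 2) ℤ) (hg : g.det = 1)
    (v₁ v₂ : Fin 2 → ℤ) (hv₁ : v₁ = fun i => g i 0) (hv₂ : v₂ = fun i => g i 1)
    (e₁ e₂ : Fin 2 → ℤ) (he₁ : e₁ = ![1, 0]) (he₂ : e₂ = ![0, 1])
    (h1 : ¬ PairEquivUpToSign v₁ v₂ e₁ e₂)
    (h2 : ¬ PairEquivUpToSign v₁ v₂ e₁ (e₁ + e₂))
    (h3 : ¬ PairEquivUpToSign v₁ v₂ e₂ (e₁ + e₂))
    (h4 : ¬ PairEquivUpToSign v₁ v₂ e₁ (e₁ - e₂))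
    (h5 : ¬ PairEquivUpToSign v₁ v₂ e₂ (e₁ - e₂)) :
    (enorm2 v₁ ≠ enorm2 v₂ ∧ enorm2 v₁ ≠ enorm2 (v₁ + v₂) ∧
        enorm2 v₂ ≠ enorm2 (v₁ + v₂)) ∧
      (enorm2 v₁ ≠ enorm2 (v₁ - v₂) ∧ enorm2 v₂ ≠ enorm2 (v₁ - v₂)) ∧
      min (enorm2 (v₁ + v₂)) (enorm2 (v₁ - v₂)) < max (enorm2 v₁) (enorm2 v₂) := by
  subst he₁ he₂
  have hunimod : (v₁ ⬝ᵥ v₁) * (v₂ ⬝ᵥ v₂) = (v₁ ⬝ᵥ v₂) ^ 2 + 1 := by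
    have hdet : v₁ 0 * v₂ 1 - v₁ 1 * v₂ 0 = 1 := by
      rw [← hg, Matrix.det_fin_two, hv₁, hv₂]
      ring
    rw [dotProduct_self_mul_dotProduct_self_fin_two, hdet, one_pow]
  have h11 : ¬(v₁ ⬝ᵥ v₁ = 1 ∧ v₂ ⬝ᵥ v₂ = 1) := fun ⟨hn, hm⟩ =>
    h1 (pairEquivUpToSign_basis_of_orthonormal hn hm (by nlinarith))
  have h12 : ¬(v₁ ⬝ᵥ v₁ = 1 ∧ v₂ ⬝ᵥ v₂ = 2) := fun ⟨hn, hm⟩ => by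
    rcases pairEquivUpToSign_adjacent_of_dotProduct_self_eq_one_two hn hm with h | h | h | h <;>
      contradiction
  have h21 : ¬(v₁ ⬝ᵥ v₁ = 2 ∧ v₂ ⬝ᵥ v₂ = 1) := fun ⟨hn, hm⟩ => by
    rcases pairEquivUpToSign_adjacent_of_dotProduct_self_eq_one_two hm hn with h | h | h | h
    exacts [h2 h.swap, h3 h.swap, h4 h.swap, h5 h.swap]
  have key := Int.ne_and_min_lt_max_of_mul_eq_sq_add_one (dotProduct_self_nonneg v₁)
    (dotProduct_self_nonneg v₂) hunimod h11 h12 h21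
  simp only [Ne, enorm2_eq_enorm2_iff, min_lt_iff, lt_max_iff, enorm2_lt_enorm2_iff,
    add_dotProduct_add_self, sub_dotProduct_sub_self] at key ⊢
  exact key
end

section
/- Let Q₁ and Q₂ be positive definite quadratic forms on ℝ^m and suppose v ∈ ℤ^m is a minimal vector of both Q₁ and Q₂. Then for every λ ∈ [0, 1], the form Q_λ = λQ₁ + (1−λ)Q₂ is positive definite and v is a minimal vector of Q_λ. (Convexity of the cells of the well-rounded retract.) -/
open Matrix

/-- The quadratic form `Q(x) = ⟨Ax, x⟩` associated to a real `m × m` matrix `A`. -/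
def quadForm {m : ℕ} (A : Matrix (Fin m) (Fin m) ℝ) (x : Fin m → ℝ) : ℝ :=
  (A.mulVec x) ⬝ᵥ x

/-- The value of the quadratic form of `A` at an integer vector `v ∈ ℤ^m ⊆ ℝ^m`. -/
def quadFormInt {m : ℕ} (A : Matrix (Fin m) (Fin m) ℝ) (v : Fin m → ℤ) : ℝ :=
  quadForm A fun i => (v i : ℝ)

theorem Matrix.PosDef.smul_add_smul {n : Type*} {A B : Matrix n n ℝ}
    (hA : A.PosDef) (hB : B.PosDef) {a b : ℝ} (ha : 0 ≤ a) (hb : 0 ≤ b) (hab : 0 < a + b) :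
    (a • A + b • B).PosDef := by
  rcases ha.eq_or_lt with rfl | ha
  · simpa using hB.smul (by simpa using hab)
  · exact (hA.smul ha).add_posSemidef (hB.posSemidef.smul hb)

theorem quadForm_smul_add_smul {m : ℕ} (A B : Matrix (Fin m) (Fin m) ℝ) (a b : ℝ)
    (x : Fin m → ℝ) :
    quadForm (a • A + b • B) x = a * quadForm A x + b * quadForm B x := by
  simp only [quadForm, add_mulVec, smul_mulVec, add_dotProduct, smul_dotProduct, smul_eq_mul]

theorem quadFormInt_smul_add_smul_le {m : ℕ} {A B : Matrix (Fin m) (Fin m) ℝ} {a b : ℝ}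
    (ha : 0 ≤ a) (hb : 0 ≤ b) {v w : Fin m → ℤ}
    (hA : quadFormInt A v ≤ quadFormInt A w) (hB : quadFormInt B v ≤ quadFormInt B w) :
    quadFormInt (a • A + b • B) v ≤ quadFormInt (a • A + b • B) w := by
  simp only [quadFormInt, quadForm_smul_add_smul] at *
  gcongr

theorem minimalVector_convex_general (m : ℕ)
    (A₁ A₂ : Matrix (Fin m) (Fin m) ℝ) (hA₁ : A₁.PosDef) (hA₂ : A₂.PosDef)
    (v : Fin m → ℤ)
    (hmin₁ : ∀ w : Fin m → ℤ, w ≠ 0 → quadFormInt A₁ v ≤ quadFormInt A₁ w)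
    (hmin₂ : ∀ w : Fin m → ℤ, w ≠ 0 → quadFormInt A₂ v ≤ quadFormInt A₂ w)
    (lam : ℝ) (h0 : 0 ≤ lam) (h1 : lam ≤ 1) :
    (lam • A₁ + (1 - lam) • A₂).PosDef ∧
      ∀ w : Fin m → ℤ, w ≠ 0 →
        quadFormInt (lam • A₁ + (1 - lam) • A₂) v ≤
          quadFormInt (lam • A₁ + (1 - lam) • A₂) w := by
  have h1' : 0 ≤ 1 - lam := sub_nonneg.2 h1
  refine ⟨hA₁.smul_add_smul hA₂ h0 h1' (by simp), fun w hw => ?_⟩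
  exact quadFormInt_smul_add_smul_le h0 h1' (hmin₁ w hw) (hmin₂ w hw)

/-- Convexity of the cells of the well-rounded retract: if `v ∈ ℤ^m` is a minimal vector
for both positive definite quadratic forms `Q₁` and `Q₂`, then for all `λ ∈ [0, 1]` the
form `Q_λ = λ Q₁ + (1 - λ) Q₂` is positive definite and `v` is a minimal vector of
`Q_λ`. -/
theorem minimalVector_convex (m : ℕ)
    (A₁ A₂ : Matrix (Fin m) (Fin m) ℝ) (hA₁ : A₁.PosDef) (hA₂ : A₂.PosDef)
    (v : Fin m → ℤ) (hv : v ≠ 0)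
    (hmin₁ : ∀ w : Fin m → ℤ, w ≠ 0 → quadFormInt A₁ v ≤ quadFormInt A₁ w)
    (hmin₂ : ∀ w : Fin m → ℤ, w ≠ 0 → quadFormInt A₂ v ≤ quadFormInt A₂ w)
    (lam : ℝ) (h0 : 0 ≤ lam) (h1 : lam ≤ 1) :
    (lam • A₁ + (1 - lam) • A₂).PosDef ∧
      ∀ w : Fin m → ℤ, w ≠ 0 →
        quadFormInt (lam • A₁ + (1 - lam) • A₂) v ≤
          quadFormInt (lam • A₁ + (1 - lam) • A₂) w :=
  minimalVector_convex_general m A₁ A₂ hA₁ hA₂ v hmin₁ hmin₂ lam h0 h1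
end
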